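/- For the matrix B with entries B^{uv,w}_{ab,c} = (1/((1+δ_{ab})(1+δ_{uv}))) { y^{bw}(y^{au}y^{cv}+y^{av}y^{cu}) + y^{aw}(y^{bu}y^{cv}+y^{bv}y^{cu}) − y^{ab}(y^{cu}y^{vw}+y^{cv}y^{uw}) − y^{uv}(y^{aw}y^{bc}+y^{ac}y^{bw}) − (y^{ua}y^{vb}+y^{ub}y^{va})y^{wc} + 2 y^{ab}y^{uv}y^{wc} }, evaluated at the standard diagonal form y^{ij} = ε_i δ_{ij} (ε_i = ±1) with n ≥ 3, the matrix B (indexed by pairs (a ≤ b, c) and (u ≤ v, w)) is invertible. -/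

import Mathlib

/-!
Extend a vector `z` indexed by `(u ≤ v, w)` to a tensor `X_{uvw}` symmetric in `u, v`. The column
weight `(1 + δ_{uv})⁻¹` turns the sum over `u ≤ v` into half the sum over all `u, v`, so `B z = 0`
says that the contraction of `X` with the bracket of `B` vanishes. At the diagonal metric this
contraction is explicit, and its vanishing at the index patterns `(a, b, c)` pairwise distinct,
`(a, c, a)`, `(a, a, c)`, `(a, a, a)` either kills a component of `X` or expresses it through the
traces `S_c = ∑ ε_j X_{jjc}` and `T_c = ∑ ε_j X_{cjj}`. Summing these relations over `j` gives
`(n - 1)(2 T_c - S_c) = 0` and `(n - 2) S_c = 0`, so for `n ≥ 3` everything vanishes.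
-/

open Finset Matrix

variable {ι R K : Type*}

theorem Fintype.sum_eq_add_card_sub_one_mul [Ring R] [Fintype ι] [DecidableEq ι] {f : ι → R}
    {c : ι} {r : R} (h : ∀ j ≠ c, f j = r) : ∑ j, f j = f c + ((Fintype.card ι : R) - 1) * r := by
  have hcompl : ∑ j ∈ {c}ᶜ, f j = ∑ j ∈ {c}ᶜ, r :=
    Finset.sum_congr rfl fun j hj => h j (by simpa using hj)
  rw [Fintype.sum_eq_add_sum_compl c, hcompl, Finset.sum_const, Finset.card_compl,
    Finset.card_singleton, nsmul_eq_mul, Nat.cast_sub (Fintype.card_pos_iff.2 ⟨c⟩), Nat.cast_one]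

abbrev UpperPairs (ι : Type*) [LE ι] := {q : ι × ι // q.1 ≤ q.2}

theorem sum_upperPairs_smul {M : Type*} [LinearOrder ι] [Fintype ι] [AddCommMonoid M]
    (g : ι → ι → M) (hg : ∀ i j, g j i = g i j) :
    ∑ q : UpperPairs ι, (if q.1.1 = q.1.2 then 1 else 2) • g q.1.1 q.1.2 = ∑ i, ∑ j, g i j := by
  have hsplit : ∀ q ∈ univ.filter (fun q : ι × ι => q.1 ≤ q.2),
      (if q.1 = q.2 then 1 else 2) • g q.1 q.2
        = g q.1 q.2 + if q.1 < q.2 then g q.1 q.2 else 0 := by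
    intro q hq
    rcases (mem_filter.1 hq).2.eq_or_lt with h | h
    · simp [h]
    · simp [h, h.ne, two_nsmul]
  have hlt : univ.filter (fun q : ι × ι => q.1 ≤ q.2 ∧ q.1 < q.2)
      = univ.filter (fun q : ι × ι => q.1 < q.2) :=
    filter_congr fun q _ => ⟨And.right, fun h => ⟨h.le, h⟩⟩
  have hswap : ∑ q ∈ univ.filter (fun q : ι × ι => q.1 < q.2), g q.1 q.2
      = ∑ q ∈ univ.filter (fun q : ι × ι => ¬ q.1 ≤ q.2), g q.1 q.2 :=
    Finset.sum_equiv (Equiv.prodComm ι ι) (by simp) (fun q _ => hg _ _)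
  rw [← Finset.sum_subtype (univ.filter fun q : ι × ι => q.1 ≤ q.2) (by simp)
      (fun q => (if q.1 = q.2 then 1 else 2) • g q.1 q.2),
    sum_congr rfl hsplit, sum_add_distrib, ← sum_filter, filter_filter, hlt, hswap,
    sum_filter_add_sum_filter_not, ← Fintype.sum_prod_type']

def symExtend {α : Type*} [LinearOrder ι] (z : UpperPairs ι × ι → α) (i j k : ι) : α :=
  z (⟨(i ⊓ j, i ⊔ j), inf_le_sup⟩, k)

theorem symExtend_comm {α : Type*} [LinearOrder ι] (z : UpperPairs ι × ι → α) (i j k : ι) :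
    symExtend z j i k = symExtend z i j k := by
  simp only [symExtend, inf_comm, sup_comm]

theorem symExtend_of_le {α : Type*} [LinearOrder ι] (z : UpperPairs ι × ι → α) (q : UpperPairs ι)
    (k : ι) : symExtend z q.1.1 q.1.2 k = z (q, k) := by
  simp only [symExtend, inf_eq_left.2 q.2, sup_eq_right.2 q.2]

section Contraction

variable [CommRing R]

def hessianKernel (Y : Matrix ι ι R) (a b c u v w : ι) : R :=
  Y b w * (Y a u * Y c v + Y a v * Y c u)
  + Y a w * (Y b u * Y c v + Y b v * Y c u)
  - Y a b * (Y c u * Y v w + Y c v * Y u w)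
  - Y u v * (Y a w * Y b c + Y a c * Y b w)
  - (Y u a * Y v b + Y u b * Y v a) * Y w c
  + 2 * Y a b * Y u v * Y w c

theorem hessianKernel_swap_uv {Y : Matrix ι ι R} (hY : Y.IsSymm) (a b c u v w : ι) :
    hessianKernel Y a b c v u w = hessianKernel Y a b c u v w := by
  unfold hessianKernel
  rw [hY.apply u v]
  ring

theorem hessianKernel_swap_ab {Y : Matrix ι ι R} (hY : Y.IsSymm) (a b c u v w : ι) :
    hessianKernel Y b a c u v w = hessianKernel Y a b c u v w := by
  unfold hessianKernel
  rw [hY.apply a b]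
  ring

variable [Fintype ι]

def hessianContract (Y : Matrix ι ι R) (X : ι → ι → ι → R) (a b c : ι) : R :=
  ∑ u, ∑ v, ∑ w, hessianKernel Y a b c u v w * X u v w

theorem hessianContract_inf_sup [LinearOrder ι] {Y : Matrix ι ι R} (hY : Y.IsSymm)
    (X : ι → ι → ι → R) (a b c : ι) :
    hessianContract Y X (a ⊓ b) (a ⊔ b) c = hessianContract Y X a b c := by
  rcases le_total a b with h | h
  · rw [inf_eq_left.2 h, sup_eq_right.2 h]
  · simp only [inf_eq_right.2 h, sup_eq_left.2 h, hessianContract, hessianKernel_swap_ab hY]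

def traceLeft (ε : ι → R) (X : ι → ι → ι → R) (c : ι) : R := ∑ j, ε j * X j j c

def traceRight (ε : ι → R) (X : ι → ι → ι → R) (c : ι) : R := ∑ j, ε j * X c j j

theorem hessianContract_diagonal [DecidableEq ι] (ε : ι → R) {X : ι → ι → ι → R}
    (hX : ∀ i j k, X j i k = X i j k) (a b c : ι) :
    hessianContract (diagonal ε) X a b c =
      2 * ε a * ε b * ε c * (X a c b + X b c a - X a b c)
      - 2 * (if a = b then ε a * ε c * (traceRight ε X c - traceLeft ε X c) else 0)
      - ε a * ε b * ((if b = c then traceLeft ε X a else 0)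
          + (if a = c then traceLeft ε X b else 0)) := by
  simp only [hessianContract, hessianKernel, traceLeft, traceRight, diagonal_apply, ite_mul,
    mul_ite, zero_mul, mul_zero, add_mul, mul_add, sub_mul, mul_sub, sum_add_distrib,
    sum_sub_distrib, sum_ite_eq, sum_ite_eq', mem_univ, if_true, sum_ite_irrel, sum_const_zero,
    mul_sum, hX _ c, hX a b c]
  split_ifs <;> ring_nf <;> simp only [← sum_mul] <;> ring

end Contraction

structure IsHessianNull [Field K] [Fintype ι] [DecidableEq ι] (ε : ι → K) (X : ι → ι → ι → K) :
    Prop where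
  symm : ∀ i j k, X j i k = X i j k
  contract_eq_zero : ∀ a b c, hessianContract (diagonal ε) X a b c = 0

namespace IsHessianNull

variable [Field K] [Fintype ι] [DecidableEq ι] {ε : ι → K} {X : ι → ι → ι → K}
  (hX : IsHessianNull ε X)
include hX

theorem reduced_eq_zero (a b c : ι) :
    2 * ε a * ε b * ε c * (X a c b + X b c a - X a b c)
      - 2 * (if a = b then ε a * ε c * (traceRight ε X c - traceLeft ε X c) else 0)
      - ε a * ε b * ((if b = c then traceLeft ε X a else 0)
          + (if a = c then traceLeft ε X b else 0)) = 0 :=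
  hessianContract_diagonal ε hX.symm a b c ▸ hX.contract_eq_zero a b c

variable (hε : ∀ i, ε i ≠ 0)
include hε

theorem two_mul_apply_of_ne {a c : ι} (hac : a ≠ c) : 2 * (ε a * X a a c) = traceLeft ε X c := by
  have h := hX.reduced_eq_zero a c a
  simp only [if_neg hac, if_neg hac.symm, if_true, mul_zero, sub_zero, zero_add, hX.symm a c a] at h
  refine mul_left_cancel₀ (mul_ne_zero (hε a) (hε c)) ?_
  linear_combination h

variable [CharZero K]

theorem apply_eq_zero_of_pairwise_ne {a b c : ι} (hab : a ≠ b) (hbc : b ≠ c) (hac : a ≠ c) :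
    X a b c = 0 := by
  have hcyclic : ∀ {a b c : ι}, a ≠ b → b ≠ c → a ≠ c → X a c b + X b c a - X a b c = 0 := by
    intro a b c hab hbc hac
    have h := hX.reduced_eq_zero a b c
    simp only [if_neg hab, if_neg hbc, if_neg hac, mul_zero, add_zero, sub_zero] at h
    exact (mul_eq_zero.1 h).resolve_left (by simp [hε])
  linear_combination (hcyclic hac hbc.symm hab + hcyclic hbc hac.symm hab.symm) / 2
    - (hX.symm a b c + hX.symm b c a + hX.symm a c b) / 2

theorem apply_self (a : ι) : ε a * X a a a = traceRight ε X a := by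
  have h := hX.reduced_eq_zero a a a
  simp only [if_true] at h
  refine mul_left_cancel₀ (mul_ne_zero (mul_ne_zero two_ne_zero (hε a)) (hε a)) ?_
  linear_combination h

theorem four_mul_apply_of_ne {a c : ι} (hac : a ≠ c) :
    4 * (ε a * X a c a) = 2 * traceRight ε X c - traceLeft ε X c := by
  have h := hX.reduced_eq_zero a a c
  simp only [if_neg hac, if_true, add_zero, mul_zero, sub_zero] at h
  have h' : ε a * (2 * X a c a - X a a c) = traceRight ε X c - traceLeft ε X c := by
    refine mul_left_cancel₀ (mul_ne_zero (mul_ne_zero two_ne_zero (hε a)) (hε c)) ?_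
    linear_combination h
  linear_combination 2 * h' + hX.two_mul_apply_of_ne hε hac

theorem two_mul_traceRight {c : ι} (hn : 2 ≤ Fintype.card ι) :
    2 * traceRight ε X c = traceLeft ε X c := by
  have hsum : 4 * traceRight ε X c
      = 4 * (ε c * X c c c)
        + ((Fintype.card ι : K) - 1) * (2 * traceRight ε X c - traceLeft ε X c) :=
    (mul_sum _ _ _).trans <| Fintype.sum_eq_add_card_sub_one_mul fun j hj => by
      rw [hX.symm j c j]; exact hX.four_mul_apply_of_ne hε hj
  have hcard : (Fintype.card ι : K) - 1 ≠ 0 :=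
    sub_ne_zero.2 (by exact_mod_cast (by omega : Fintype.card ι ≠ 1))
  rw [hX.apply_self hε] at hsum
  have h := (mul_eq_zero.1 (by linear_combination -hsum :
    ((Fintype.card ι : K) - 1) * (2 * traceRight ε X c - traceLeft ε X c) = 0)).resolve_left hcard
  linear_combination h

theorem traceLeft_eq_zero (hn : 3 ≤ Fintype.card ι) (c : ι) : traceLeft ε X c = 0 := by
  have hsum : 2 * traceLeft ε X c
      = 2 * (ε c * X c c c) + ((Fintype.card ι : K) - 1) * traceLeft ε X c :=
    (mul_sum _ _ _).trans <| Fintype.sum_eq_add_card_sub_one_mul fun j hj =>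
      hX.two_mul_apply_of_ne hε hj
  have hcard : (Fintype.card ι : K) - 2 ≠ 0 :=
    sub_ne_zero.2 (by exact_mod_cast (by omega : Fintype.card ι ≠ 2))
  rw [hX.apply_self hε, hX.two_mul_traceRight hε (by omega)] at hsum
  exact (mul_eq_zero.1 (by linear_combination -hsum :
    ((Fintype.card ι : K) - 2) * traceLeft ε X c = 0)).resolve_left hcard

theorem traceRight_eq_zero (hn : 3 ≤ Fintype.card ι) (c : ι) : traceRight ε X c = 0 := by
  have h := hX.two_mul_traceRight hε (c := c) (by omega)
  rw [hX.traceLeft_eq_zero hε hn] at h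
  simpa using h

theorem eq_zero (hn : 3 ≤ Fintype.card ι) : X = 0 := by
  have hS := hX.traceLeft_eq_zero hε hn
  have hT := hX.traceRight_eq_zero hε hn
  funext a b c
  obtain rfl | hab := eq_or_ne a b
  · obtain rfl | hac := eq_or_ne a c
    · simpa [hT, hε] using hX.apply_self hε a
    · simpa [hS, hε] using hX.two_mul_apply_of_ne hε hac
  obtain rfl | hac := eq_or_ne a c
  · simpa [hS, hT, hε] using hX.four_mul_apply_of_ne hε hab
  obtain rfl | hbc := eq_or_ne b c
  · simpa [hX.symm, hS, hT, hε] using hX.four_mul_apply_of_ne hε hab.symm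
  exact hX.apply_eq_zero_of_pairwise_ne hε hab hbc hac

end IsHessianNull

section HessianMatrix

variable [Field K] [LinearOrder ι]

def diagWeight (q : UpperPairs ι) : K :=
  (1 + if q.1.1 = q.1.2 then 1 else 0)⁻¹

/-- The paper's `B^{uv,w}_{ab,c}` at the metric `Y`, with rows `(a ≤ b, c)` and columns
`(u ≤ v, w)`. -/
def hessianMatrix (Y : Matrix ι ι K) : Matrix (UpperPairs ι × ι) (UpperPairs ι × ι) K :=
  of fun row col => diagWeight row.1 * diagWeight col.1 *
    hessianKernel Y row.1.1.1 row.1.1.2 row.2 col.1.1.1 col.1.1.2 col.2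

variable [CharZero K] [Fintype ι]

theorem hessianMatrix_mulVec_apply {Y : Matrix ι ι K} (hY : Y.IsSymm) (z : UpperPairs ι × ι → K)
    (p : UpperPairs ι) (c : ι) :
    (hessianMatrix Y *ᵥ z) (p, c)
      = diagWeight p * 2⁻¹ * hessianContract Y (symExtend z) p.1.1 p.1.2 c := by
  have hsym : ∀ u v, ∑ w, hessianKernel Y p.1.1 p.1.2 c v u w * symExtend z v u w
      = ∑ w, hessianKernel Y p.1.1 p.1.2 c u v w * symExtend z u v w := fun u v => by
    simp only [hessianKernel_swap_uv hY, symExtend_comm]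
  rw [hessianContract, ← sum_upperPairs_smul _ hsym, mulVec, dotProduct, Fintype.sum_prod_type,
    mul_sum]
  refine sum_congr rfl fun q _ => ?_
  simp only [hessianMatrix, of_apply, ← symExtend_of_le z q, diagWeight, mul_sum, smul_sum]
  refine sum_congr rfl fun w _ => ?_
  split_ifs <;> simp only [one_smul, nsmul_eq_mul, Nat.cast_ofNat] <;> ring

theorem det_hessianMatrix_diagonal_ne_zero {ε : ι → K} (hε : ∀ i, ε i ≠ 0)
    (hn : 3 ≤ Fintype.card ι) : (hessianMatrix (diagonal ε)).det ≠ 0 := by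
  rw [Ne, ← exists_mulVec_eq_zero_iff]
  rintro ⟨z, hz0, hz⟩
  have hnull : IsHessianNull ε (symExtend z) := by
    refine ⟨symExtend_comm z, fun a b c => ?_⟩
    have h := congrFun hz (⟨(a ⊓ b, a ⊔ b), inf_le_sup⟩, c)
    rw [hessianMatrix_mulVec_apply (isSymm_diagonal ε),
      hessianContract_inf_sup (isSymm_diagonal ε), Pi.zero_apply] at h
    refine (mul_eq_zero.1 h).resolve_left (mul_ne_zero ?_ (by norm_num))
    unfold diagWeight
    split_ifs <;> norm_num
  refine hz0 (funext fun p => ?_)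
  rw [← symExtend_of_le z p.1 p.2, hnull.eq_zero hε hn]
  rfl

end HessianMatrix

open Finset in
/-- The Hessian matrix `B` of the first-order Lagrangian `L^∇`, with entries
given by the displayed formula, evaluated at the standard diagonal metric
`y^{ij} = ε_i δ_{ij}` (with `ε_i = ±1`, `n ≥ 3`), indexed by pairs
`(a ≤ b, c)` (rows) and `(u ≤ v, w)` (columns), is invertible. -/
theorem hessian_invertible {n : ℕ} (hn : 3 ≤ n)
    (ε : Fin n → ℝ) (hε : ∀ a, ε a = 1 ∨ ε a = -1)
    (Y : Fin n → Fin n → ℝ) (hY : ∀ i j, Y i j = if i = j then ε i else 0)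
    (δ : Fin n → Fin n → ℝ) (hδ : ∀ i j, δ i j = if i = j then 1 else 0)
    (B : Matrix ({q : Fin n × Fin n // q.1 ≤ q.2} × Fin n)
               ({q : Fin n × Fin n // q.1 ≤ q.2} × Fin n) ℝ)
    (hB : ∀ (row col : {q : Fin n × Fin n // q.1 ≤ q.2} × Fin n),
      B row col =
        (1 / ((1 + δ row.1.1.1 row.1.1.2) * (1 + δ col.1.1.1 col.1.1.2))) *
        (let a := row.1.1.1; let b := row.1.1.2; let c := row.2
         let u := col.1.1.1; let v := col.1.1.2; let w := col.2
         Y b w * (Y a u * Y c v + Y a v * Y c u)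
         + Y a w * (Y b u * Y c v + Y b v * Y c u)
         - Y a b * (Y c u * Y v w + Y c v * Y u w)
         - Y u v * (Y a w * Y b c + Y a c * Y b w)
         - (Y u a * Y v b + Y u b * Y v a) * Y w c
         + 2 * Y a b * Y u v * Y w c)) :
    B.det ≠ 0 := by
  obtain rfl : Y = diagonal ε := by
    ext i j
    rw [hY, diagonal_apply]
  have hBY : B = hessianMatrix (diagonal ε) := by
    ext row col
    rw [hB, hδ, hδ, one_div, mul_inv]
    rfl
  rw [hBY]
  refine det_hessianMatrix_diagonal_ne_zero (fun i => ?_) (by rwa [Fintype.card_fin])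
  rcases hε i with h | h <;> simp [h]
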